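/- Let D ≤ Σᵢ (pᵢ+qᵢ) denote partial sums where p₁ = q₁ = 1, p_{n+1} = n·Σ_{i=1}^n (pᵢ+qᵢ), and q_{n+1} = n·(Σ_{i=1}^n (pᵢ+qᵢ) + p_{n+1}), and let α = 0^{p₁}1^{q₁}0^{p₂}1^{q₂}⋯. With scaling factors s₀(n) = Σ_{i=1}^n (pᵢ+qᵢ) and s₁(n) = Σ_{i=1}^n (pᵢ+qᵢ) + p_{n+1}: for every n and every position a with 1 < a/s₀(n) < n, the colour α(a) = 0; and for every position a with 1 < a/s₁(n) < n, the colour α(a) = 1. -/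

import Mathlib

open scoped Classical

/-- `S n = ∑_{i=1}^n (pᵢ + qᵢ)`, where `p₁ = q₁ = 1`, `p_{n+1} = n · S n` and
`q_{n+1} = n · (S n + p_{n+1})`; this gives `S (n+1) = S n + n·S n + n·(S n + n·S n)`. -/
def S17 : ℕ → ℕ
  | 0 => 0
  | 1 => 2
  | n + 2 =>
      S17 (n + 1) + (n + 1) * S17 (n + 1) +
        (n + 1) * (S17 (n + 1) + (n + 1) * S17 (n + 1))

/-- `p₁ = 1` and `p_{n+1} = n · S n` for `n ≥ 1`. -/
def p17 (n : ℕ) : ℕ := if n ≤ 1 then 1 else (n - 1) * S17 (n - 1)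

/-- `q₁ = 1` and `q_{n+1} = n · (S n + p_{n+1})` for `n ≥ 1`. -/
def q17 (n : ℕ) : ℕ := if n ≤ 1 then 1 else (n - 1) * (S17 (n - 1) + p17 n)

/-- The string `α = 0^{p₁} 1^{q₁} 0^{p₂} 1^{q₂} ⋯`: position `a` is coloured `0` iff
it lies in the `0`-part `[S (n-1), S (n-1) + pₙ)` of some block pair `n ≥ 1`. -/
noncomputable def alpha17 : ℕ → Fin 2 := fun a =>
  if ∃ n ≤ a + 1, 1 ≤ n ∧ S17 (n - 1) ≤ a ∧ a < S17 (n - 1) + p17 n then 0 else 1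

/-!
Each block of `α` is `n` times as long as everything before it: `S n + p_{n+1} = (n+1)·S n`
and `S (n+1) = (n+1)·(S n + p_{n+1})`. So scaling the prefix of length `S n` by a factor in
`(1, n)` lands inside the `0`-block `0^{p_{n+1}}`, and scaling the prefix of length
`S n + p_{n+1}` by such a factor lands inside the `1`-block `1^{q_{n+1}}`.
-/

lemma p17_succ {n : ℕ} (hn : 1 ≤ n) : p17 (n + 1) = n * S17 n := by
  simp [p17, show ¬ n + 1 ≤ 1 by omega]

lemma q17_succ {n : ℕ} (hn : 1 ≤ n) : q17 (n + 1) = n * (S17 n + p17 (n + 1)) := by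
  simp [q17, show ¬ n + 1 ≤ 1 by omega]

lemma S17_succ (n : ℕ) : S17 (n + 1) = S17 n + p17 (n + 1) + q17 (n + 1) := by
  cases n with
  | zero => simp [S17, p17, q17]
  | succ m =>
    rw [q17_succ (by omega), p17_succ (by omega)]
    rfl

lemma S17_add_p17_succ {n : ℕ} (hn : 1 ≤ n) : S17 n + p17 (n + 1) = (n + 1) * S17 n := by
  rw [p17_succ hn]; ring

lemma S17_succ_eq_mul {n : ℕ} (hn : 1 ≤ n) :
    S17 (n + 1) = (n + 1) * (S17 n + p17 (n + 1)) := by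
  rw [S17_succ, q17_succ hn]; ring

lemma S17_mono : Monotone S17 :=
  monotone_nat_of_le_succ fun n => by rw [S17_succ]; omega

lemma le_S17 (n : ℕ) : n ≤ S17 n := by
  induction n with
  | zero => exact Nat.zero_le _
  | succ m ih =>
    rcases Nat.eq_zero_or_pos m with rfl | hm
    · simp [S17]
    · rw [S17_succ_eq_mul hm, S17_add_p17_succ hm]
      exact Nat.le_mul_of_pos_right _ (Nat.mul_pos m.succ_pos (hm.trans_le ih))

lemma alpha17_eq_zero_iff {a : ℕ} :
    alpha17 a = 0 ↔ ∃ m, S17 m ≤ a ∧ a < S17 m + p17 (m + 1) := by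
  have hblocks : (∃ n ≤ a + 1, 1 ≤ n ∧ S17 (n - 1) ≤ a ∧ a < S17 (n - 1) + p17 n) ↔
      ∃ m, S17 m ≤ a ∧ a < S17 m + p17 (m + 1) := by
    constructor
    · rintro ⟨n, -, hn, hblock⟩
      exact ⟨n - 1, by rwa [Nat.sub_add_cancel hn]⟩
    · rintro ⟨m, hblock⟩
      -- the bound `n ≤ a + 1` built into `alpha17` holds automatically, as `m ≤ S17 m`
      exact ⟨m + 1, by linarith [le_S17 m], by omega, by simpa using hblock⟩
  unfold alpha17
  split_ifs with h
  · simpa using hblocks.1 h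
  · simpa using mt hblocks.2 h

lemma alpha17_eq_one_of_mem {m a : ℕ} (hlo : S17 m + p17 (m + 1) ≤ a) (hhi : a < S17 (m + 1)) :
    alpha17 a = 1 := by
  refine Fin.eq_one_of_ne_zero _ fun h => ?_
  obtain ⟨k, hk_lo, hk_hi⟩ := alpha17_eq_zero_iff.1 h
  rcases lt_trichotomy k m with hkm | rfl | hmk
  · have := S17_mono (show k + 1 ≤ m by omega)
    have := S17_succ k
    omega
  · omega
  · have := S17_mono (show m + 1 ≤ k by omega)
    omega

/-- With the scaling factors `s₀ n = S n` and `s₁ n = S n + p_{n+1}`: every position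
`a` with `1 < a / s₀ n < n` is coloured `0`, and every position `a` with
`1 < a / s₁ n < n` is coloured `1`. -/
theorem alpha17_colours (n : ℕ) (hn : 1 ≤ n) (a : ℕ) :
    (S17 n < a → a < n * S17 n → alpha17 a = 0) ∧
    (S17 n + p17 (n + 1) < a → a < n * (S17 n + p17 (n + 1)) → alpha17 a = 1) := by
  constructor
  · intro hlo hhi
    refine alpha17_eq_zero_iff.2 ⟨n, hlo.le, ?_⟩
    rw [S17_add_p17_succ hn]
    nlinarith
  · intro hlo hhi
    refine alpha17_eq_one_of_mem hlo.le ?_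
    rw [S17_succ_eq_mul hn]
    nlinarith
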